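/- arXiv:2105.13207 — 10 statements merged into one kernel-verified Lean document; each statement's English description precedes it below -/
import Mathlib

section
/- Let G be the Klein four-group with generators σ₁, σ₂ acting on a multiplicatively-written F₂[G]-module W. If M and N are submodules of W, then M ∩ N = {1} if and only if M^G ∩ N^G = {1}, where M^G denotes the submodule of elements fixed by every element of G. -/
/-!
If an involution σ of an `𝔽₂`-module preserves `P`, then for `x ∈ P` the vector `x + σ x` is a
σ-fixed vector of `P`; so if the only such vector is `0`, then `σ x = -x = x`, i.e. `x` is itself
fixed, hence `0`. Apply this first to σ₂ on the σ₁-fixed part of `M ⊓ N` (which σ₂ preserves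
because the involutions commute), then to σ₁ on `M ⊓ N`.
-/

theorem Submodule.eq_bot_of_forall_fixed_eq_zero {W : Type*} [AddCommGroup W] [Module (ZMod 2) W]
    (σ : W →ₗ[ZMod 2] W) (hσ : ∀ x, σ (σ x) = x) (P : Submodule (ZMod 2) W)
    (hP : ∀ x ∈ P, σ x ∈ P) (hfix : ∀ x ∈ P, σ x = x → x = 0) : P = ⊥ := by
  refine (Submodule.eq_bot_iff P).2 fun x hx => hfix x hx ?_
  have hsum : x + σ x = 0 :=
    hfix _ (P.add_mem hx (hP x hx)) (by rw [map_add, hσ, add_comm])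
  rw [eq_neg_of_add_eq_zero_right hsum, ZModModule.neg_eq_self]

/-- For submodules M, N of an F₂[G]-module W (G the Klein four-group with
generators σ₁, σ₂), M ∩ N is trivial iff the intersection of their fixed
submodules is trivial. -/
theorem stmt_0 (W : Type*) [AddCommGroup W] [Module (ZMod 2) W]
    (σ1 σ2 : W →ₗ[ZMod 2] W)
    (hσ1 : ∀ x, σ1 (σ1 x) = x) (hσ2 : ∀ x, σ2 (σ2 x) = x)
    (hcomm : ∀ x, σ1 (σ2 x) = σ2 (σ1 x))
    (M N : Submodule (ZMod 2) W)
    (hM1 : ∀ x ∈ M, σ1 x ∈ M) (hM2 : ∀ x ∈ M, σ2 x ∈ M)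
    (hN1 : ∀ x ∈ N, σ1 x ∈ N) (hN2 : ∀ x ∈ N, σ2 x ∈ N) :
    M ⊓ N = ⊥ ↔ ∀ x, x ∈ M → x ∈ N → σ1 x = x → σ2 x = x → x = 0 := by
  refine ⟨fun h x hxM hxN _ _ => (Submodule.eq_bot_iff _).1 h x ⟨hxM, hxN⟩, fun h => ?_⟩
  have hfixed₁ : M ⊓ N ⊓ σ1.eqLocus LinearMap.id = ⊥ := by
    refine Submodule.eq_bot_of_forall_fixed_eq_zero σ2 hσ2 _ ?_ fun x hx => h x hx.1.1 hx.1.2 hx.2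
    rintro x ⟨⟨hxM, hxN⟩, hx1⟩
    refine ⟨⟨hM2 x hxM, hN2 x hxN⟩, ?_⟩
    simp only [SetLike.mem_coe, LinearMap.mem_eqLocus, LinearMap.id_apply] at hx1 ⊢
    rw [hcomm, hx1]
  refine Submodule.eq_bot_of_forall_fixed_eq_zero σ1 hσ1 _
    (fun x hx => ⟨hM1 x hx.1, hN1 x hx.2⟩) fun x hx hx1 => ?_
  exact (Submodule.eq_bot_iff _).1 hfixed₁ x ⟨hx, hx1⟩
end

section
/- Let F be a field with char F ≠ 2 and a₁, a₂ ∈ F× such that K = F(√a₁, √a₂) is biquadratic over F. If f₁, f₂, f₃, f₄ ∈ F satisfy f₁f₄ = f₂f₃ and g := f₁² − a₁f₂² − a₂f₃² + a₁a₂f₄² ≠ 0, then g is a product of an element of N_{K₁/F}(K₁×) and an element of N_{K₂/F}(K₂×), where K₁ = F(√a₁) and K₂ = F(√a₂). -/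
/-! With `d = f₁² − a₁f₂²`, `e = f₃² − a₁f₄²` and `c = f₁f₃ − a₁f₂f₄` we have `g = d − a₂e`, and
the relation `f₁f₄ = f₂f₃` makes the multiplicativity identity for norms from `F(√a₁)` read
`de = c²`. Hence `dg = d² − a₂c²` and `eg = c² − a₂e²` are norms from `F(√a₂)`, while `d⁻¹` and
`e⁻¹` are norms from `F(√a₁)`, so `g` is a product of norms as soon as `d ≠ 0` or `e ≠ 0`;
otherwise `g = 0`. -/

theorem sub_mul_sq_mul_sub_mul_sq_eq_sq {R : Type*} [CommRing R] (a f1 f2 f3 f4 : R)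
    (hrel : f1 * f4 = f2 * f3) :
    (f1 ^ 2 - a * f2 ^ 2) * (f3 ^ 2 - a * f4 ^ 2) = (f1 * f3 - a * f2 * f4) ^ 2 := by
  linear_combination (-a * (f1 * f4 - f2 * f3)) * hrel

theorem inv_sub_mul_sq {F : Type*} [Field F] (a x y : F) (hd : x ^ 2 - a * y ^ 2 ≠ 0) :
    (x ^ 2 - a * y ^ 2)⁻¹ =
      (x / (x ^ 2 - a * y ^ 2)) ^ 2 - a * (y / (x ^ 2 - a * y ^ 2)) ^ 2 := by
  field_simp

theorem exists_eq_norm_mul_norm_of_mul_eq {F : Type*} [Field F] (a b x y u v g : F)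
    (hd : x ^ 2 - a * y ^ 2 ≠ 0) (hg : (x ^ 2 - a * y ^ 2) * g = u ^ 2 - b * v ^ 2) :
    ∃ x y z w : F, g = (x ^ 2 - a * y ^ 2) * (z ^ 2 - b * w ^ 2) :=
  ⟨x / (x ^ 2 - a * y ^ 2), y / (x ^ 2 - a * y ^ 2), u, v, by
    rw [← inv_sub_mul_sq a x y hd, ← hg, inv_mul_cancel_left₀ hd]⟩

theorem stmt_3_general (F : Type*) [Field F] (a1 a2 : F)
    (f1 f2 f3 f4 : F) (hrel : f1 * f4 = f2 * f3)
    (g : F) (hg : g = f1 ^ 2 - a1 * f2 ^ 2 - a2 * f3 ^ 2 + a1 * a2 * f4 ^ 2) :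
    ∃ x y z w : F, g = (x ^ 2 - a1 * y ^ 2) * (z ^ 2 - a2 * w ^ 2) := by
  set d := f1 ^ 2 - a1 * f2 ^ 2
  set e := f3 ^ 2 - a1 * f4 ^ 2
  set c := f1 * f3 - a1 * f2 * f4
  have hde : d * e = c ^ 2 := sub_mul_sq_mul_sub_mul_sq_eq_sq a1 f1 f2 f3 f4 hrel
  have hg' : g = d - a2 * e := by rw [hg]; ring
  by_cases hd : d = 0
  · by_cases he : e = 0
    · exact ⟨0, 0, 0, 0, by rw [hg', hd, he]; ring⟩
    · refine exists_eq_norm_mul_norm_of_mul_eq a1 a2 f3 f4 c e g he ?_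
      rw [hg', ← hde]
      ring
  · refine exists_eq_norm_mul_norm_of_mul_eq a1 a2 f1 f2 d c g hd ?_
    rw [hg', ← hde]
    ring

/-- If f₁f₄ = f₂f₃ and g = f₁² − a₁f₂² − a₂f₃² + a₁a₂f₄² ≠ 0, then g is a
product of a norm from F(√a₁) and a norm from F(√a₂). -/
theorem stmt_3 (F : Type*) [Field F] (hchar : (2 : F) ≠ 0) (a1 a2 : F)
    (ha1 : a1 ≠ 0) (ha2 : a2 ≠ 0)
    (hn1 : ¬ ∃ g : F, a1 = g ^ 2) (hn2 : ¬ ∃ g : F, a2 = g ^ 2)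
    (hn3 : ¬ ∃ g : F, a1 * a2 = g ^ 2)
    (f1 f2 f3 f4 : F) (hrel : f1 * f4 = f2 * f3)
    (g : F) (hg : g = f1 ^ 2 - a1 * f2 ^ 2 - a2 * f3 ^ 2 + a1 * a2 * f4 ^ 2)
    (hg0 : g ≠ 0) :
    ∃ x y z w : F, g = (x ^ 2 - a1 * y ^ 2) * (z ^ 2 - a2 * w ^ 2) :=
  stmt_3_general F a1 a2 f1 f2 f3 f4 hrel g hg
end

section
/- Let F be a field of characteristic ≠ 2 and K = F(√a₁, √a₂) biquadratic over F with intermediate field K₃ = F(√(a₁a₂)). Every element of F× ∩ N_{K/K₃}(K×) lies in N_{K₁/F}(K₁×) · N_{K₂/F}(K₂×), where K₁ = F(√a₁) and K₂ = F(√a₂). -/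
/-!
Write `k = x + y√a₁ + z√a₂ + w√a₁√a₂`. Since `σ` negates `√a₁` and `√a₂`,
`k · σ k = (x² - a₁y² - a₂z² + a₁a₂w²) + 2(xw - yz)√a₁√a₂`, so `f = k · σ k ∈ F` forces
`f = x² - a₁y² - a₂z² + a₁a₂w²` and `xw = yz`. Under `xw = yz` one has the identity
`f · (x² - a₁y²) = (x² - a₁y²)² - a₂(xz - a₁yw)²`, which exhibits `f` as a product of norms
as soon as `x² - a₁y² ≠ 0`, and symmetrically when `x² - a₂z² ≠ 0`. If both vanish, either
`a₁` is a nonzero square, and then every element of `F` is a norm from `F(√a₁)`, or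
`x = y = 0` and `f = a₁a₂w²`, or `f = 0`.
-/

section NormForms

variable {F : Type*} [Field F]

theorem exists_sq_sub_mul_sq_of_eq_sq (hchar : (2 : F) ≠ 0) {a b : F} (hb : b ≠ 0)
    (hab : a = b ^ 2) (t : F) : ∃ x y : F, t = x ^ 2 - a * y ^ 2 :=
  ⟨(t + 1) / 2, (t - 1) / (2 * b), by field_simp; rw [hab]; ring⟩

theorem exists_norm_mul_norm_of_left_ne_zero (a1 a2 : F) {x y z w : F} (hxw : x * w = y * z)
    (h1 : x ^ 2 - a1 * y ^ 2 ≠ 0) :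
    ∃ X Y Z W : F, x ^ 2 - a1 * y ^ 2 - a2 * z ^ 2 + a1 * a2 * w ^ 2
      = (X ^ 2 - a1 * Y ^ 2) * (Z ^ 2 - a2 * W ^ 2) := by
  refine ⟨x, y, 1, (x * z - a1 * y * w) / (x ^ 2 - a1 * y ^ 2), ?_⟩
  field_simp
  linear_combination a1 * a2 * (x * w - y * z) * hxw

theorem exists_norm_mul_norm (hchar : (2 : F) ≠ 0) (a1 a2 : F) {x y z w : F}
    (hxw : x * w = y * z) :
    ∃ X Y Z W : F, x ^ 2 - a1 * y ^ 2 - a2 * z ^ 2 + a1 * a2 * w ^ 2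
      = (X ^ 2 - a1 * Y ^ 2) * (Z ^ 2 - a2 * W ^ 2) := by
  rcases ne_or_eq (x ^ 2 - a1 * y ^ 2) 0 with h1 | h1
  · exact exists_norm_mul_norm_of_left_ne_zero a1 a2 hxw h1
  rcases ne_or_eq (x ^ 2 - a2 * z ^ 2) 0 with h2 | h2
  · obtain ⟨X, Y, Z, W, h⟩ := exists_norm_mul_norm_of_left_ne_zero a2 a1
      (x := x) (y := z) (z := y) (w := w) (by linear_combination hxw) h2
    exact ⟨Z, W, X, Y, by linear_combination h⟩
  by_cases hy : y = 0
  · subst hy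
    have hx : x = 0 := pow_eq_zero_iff two_ne_zero |>.mp (by linear_combination h1)
    subst hx
    exact ⟨0, 1, 0, w, by linear_combination h2⟩
  by_cases hx : x = 0
  · subst hx
    have ha1 : a1 = 0 := by simpa [hy] using h1
    have hz : z = 0 := by simpa [hy] using hxw
    exact ⟨0, 0, 0, 0, by simp [ha1, hz]⟩
  have ha1 : a1 = (x / y) ^ 2 := by field_simp; linear_combination -h1
  obtain ⟨X, Y, h⟩ := exists_sq_sub_mul_sq_of_eq_sq hchar (div_ne_zero hx hy) ha1
    (x ^ 2 - a1 * y ^ 2 - a2 * z ^ 2 + a1 * a2 * w ^ 2)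
  exact ⟨X, Y, 1, 0, by rw [h]; ring⟩

end NormForms

theorem Submodule.exists_eq_of_span_four_eq_top {R M : Type*} [Semiring R] [AddCommMonoid M]
    [Module R M] {v₀ v₁ v₂ v₃ : M} (h : span R {v₀, v₁, v₂, v₃} = ⊤) (m : M) :
    ∃ a b c d : R, m = a • v₀ + b • v₁ + c • v₂ + d • v₃ := by
  obtain ⟨a, _, h₁, rfl⟩ := mem_span_insert.mp (h ▸ mem_top : m ∈ span R {v₀, v₁, v₂, v₃})
  obtain ⟨b, _, h₂, rfl⟩ := mem_span_insert.mp h₁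
  obtain ⟨c, _, h₃, rfl⟩ := mem_span_insert.mp h₂
  obtain ⟨d, rfl⟩ := mem_span_singleton.mp h₃
  exact ⟨a, b, c, d, by abel⟩

section Biquadratic

variable {F K : Type*} [Field F] [Field K] [Algebra F K] {a1 a2 : F} {s1 s2 : K}

theorem biquadratic_mul_conj (hs1 : s1 ^ 2 = algebraMap F K a1)
    (hs2 : s2 ^ 2 = algebraMap F K a2) (x y z w : F) :
    (x • 1 + y • s1 + z • s2 + w • (s1 * s2)) * (x • 1 - y • s1 - z • s2 + w • (s1 * s2))
      = (x ^ 2 - a1 * y ^ 2 - a2 * z ^ 2 + a1 * a2 * w ^ 2) • 1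
        + (2 * (x * w - y * z)) • (s1 * s2) := by
  simp only [Algebra.smul_def, map_add, map_sub, map_mul, map_pow, map_ofNat, mul_one]
  linear_combination ((algebraMap F K w) ^ 2 * s2 ^ 2 - (algebraMap F K y) ^ 2) * hs1
    + ((algebraMap F K w) ^ 2 * algebraMap F K a1 - (algebraMap F K z) ^ 2) * hs2

theorem exists_eq_and_mul_eq_of_algebraMap_eq_mul_conj (hchar : (2 : F) ≠ 0)
    (hs1 : s1 ^ 2 = algebraMap F K a1) (hs2 : s2 ^ 2 = algebraMap F K a2)
    (hli : LinearIndependent F ![(1 : K), s1, s2, s1 * s2])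
    (hsp : Submodule.span F ({1, s1, s2, s1 * s2} : Set K) = ⊤)
    {σ : K ≃ₐ[F] K} (hσ1 : σ s1 = -s1) (hσ2 : σ s2 = -s2) {f : F} {k : K}
    (hk : algebraMap F K f = k * σ k) :
    ∃ x y z w : F, f = x ^ 2 - a1 * y ^ 2 - a2 * z ^ 2 + a1 * a2 * w ^ 2 ∧ x * w = y * z := by
  obtain ⟨x, y, z, w, rfl⟩ := Submodule.exists_eq_of_span_four_eq_top hsp k
  have hσk : σ (x • 1 + y • s1 + z • s2 + w • (s1 * s2))
      = x • 1 - y • s1 - z • s2 + w • (s1 * s2) := by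
    simp only [map_add, map_smul, map_mul, map_one, hσ1, hσ2, smul_neg, neg_mul_neg]
    abel
  rw [hσk, biquadratic_mul_conj hs1 hs2, Algebra.algebraMap_eq_smul_one] at hk
  have hcoef := Fintype.linearIndependent_iffₛ.mp hli
    ![f, 0, 0, 0] ![_, 0, 0, 2 * (x * w - y * z)] (by simpa [Fin.sum_univ_four] using hk)
  refine ⟨x, y, z, w, hcoef 0, ?_⟩
  have h3 : (2 : F) * (x * w - y * z) = 0 := (hcoef 3).symm
  linear_combination (mul_eq_zero.mp h3).resolve_left hchar

end Biquadratic

theorem stmt_4_general (F K : Type*) [Field F] [Field K] [Algebra F K]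
    (hchar : (2 : F) ≠ 0) (a1 a2 : F)
    (s1 s2 : K) (hs1 : s1 ^ 2 = algebraMap F K a1) (hs2 : s2 ^ 2 = algebraMap F K a2)
    (hli : LinearIndependent F ![(1 : K), s1, s2, s1 * s2])
    (hsp : Submodule.span F ({1, s1, s2, s1 * s2} : Set K) = ⊤)
    (σ : K ≃ₐ[F] K) (hσ1 : σ s1 = -s1) (hσ2 : σ s2 = -s2)
    (f : F)
    (hnorm : ∃ k : K, k ≠ 0 ∧ algebraMap F K f = k * σ k) :
    ∃ x y z w : F, f = (x ^ 2 - a1 * y ^ 2) * (z ^ 2 - a2 * w ^ 2) := by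
  obtain ⟨k, -, hk⟩ := hnorm
  obtain ⟨x, y, z, w, rfl, hxw⟩ :=
    exists_eq_and_mul_eq_of_algebraMap_eq_mul_conj hchar hs1 hs2 hli hsp hσ1 hσ2 hk
  exact exists_norm_mul_norm hchar a1 a2 hxw

/-- Every element of F× that is a norm from K to K₃ = F(√a₁a₂) is a product
of a norm from K₁ = F(√a₁) and a norm from K₂ = F(√a₂). -/
theorem stmt_4 (F K : Type*) [Field F] [Field K] [Algebra F K]
    (hchar : (2 : F) ≠ 0) (a1 a2 : F)
    (s1 s2 : K) (hs1 : s1 ^ 2 = algebraMap F K a1) (hs2 : s2 ^ 2 = algebraMap F K a2)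
    (hli : LinearIndependent F ![(1 : K), s1, s2, s1 * s2])
    (hsp : Submodule.span F ({1, s1, s2, s1 * s2} : Set K) = ⊤)
    (σ : K ≃ₐ[F] K) (hσ1 : σ s1 = -s1) (hσ2 : σ s2 = -s2)
    (f : F) (hf : f ≠ 0)
    (hnorm : ∃ k : K, k ≠ 0 ∧ algebraMap F K f = k * σ k) :
    ∃ x y z w : F, f = (x ^ 2 - a1 * y ^ 2) * (z ^ 2 - a2 * w ^ 2) :=
  stmt_4_general F K hchar a1 a2 s1 s2 hs1 hs2 hli hsp σ hσ1 hσ2 f hnorm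
end

section
/- Let F be a field of characteristic ≠ 2 and K = F(√a₁, √a₂) biquadratic over F with K₃ = F(√(a₁a₂)). If f ∈ F× and f = N_{K/K₃}(k)·k̂² for some k, k̂ ∈ K×, then there exist k̃ ∈ K× and ε ∈ {0,1} such that f/a₁^ε = N_{K/K₃}(k̃). -/
/-!
Applying the involution σ to `f = k σ(k) k̂²` gives `k̂² = σ(k̂)²`, so `σ(k̂) = ±k̂`.
If `σ(k̂) = k̂` then `f` is the norm of `k k̂`; if `σ(k̂) = -k̂` then, since `σ(√a₁) = -√a₁` as well,
the norm of `k k̂ / √a₁` is `f / a₁`.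
-/

theorem AlgEquiv.apply_apply_eq_self_of_span {F K : Type*} [CommRing F] [Ring K] [Algebra F K]
    (σ : K ≃ₐ[F] K) {S : Set K} (hS : Submodule.span F S = ⊤)
    (hσS : ∀ x ∈ S, σ (σ x) = x) (x : K) : σ (σ x) = x := by
  have h : σ.toLinearMap ∘ₗ σ.toLinearMap = LinearMap.id :=
    LinearMap.ext_on hS hσS
  exact LinearMap.congr_fun h x

theorem apply_eq_or_eq_neg_of_mul_apply_mul_sq_fixed {K G : Type*} [Field K] [FunLike G K K]
    [RingHomClass G K K] (σ : G) (hσ : ∀ x, σ (σ x) = x) {k c : K} (hk : k ≠ 0)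
    (hfix : σ (k * σ k * c ^ 2) = k * σ k * c ^ 2) : σ c = c ∨ σ c = -c := by
  have hσk : σ k ≠ 0 := (map_ne_zero σ).mpr hk
  rw [map_mul, map_mul, map_pow, hσ, mul_comm (σ k)] at hfix
  exact sq_eq_sq_iff_eq_or_eq_neg.mp (mul_left_cancel₀ (mul_ne_zero hk hσk) hfix)

theorem stmt_6_general (F K : Type*) [Field F] [Field K] [Algebra F K]
    (a1 : F) (ha1 : a1 ≠ 0)
    (s1 s2 : K) (hs1 : s1 ^ 2 = algebraMap F K a1)
    (hsp : Submodule.span F ({1, s1, s2, s1 * s2} : Set K) = ⊤)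
    (σ : K ≃ₐ[F] K) (hσ1 : σ s1 = -s1) (hσ2 : σ s2 = -s2)
    (f : F)
    (hnorm : ∃ k khat : K, k ≠ 0 ∧ khat ≠ 0 ∧
      algebraMap F K f = k * σ k * khat ^ 2) :
    ∃ (kt : K) (ε : ℕ), ε ≤ 1 ∧ kt ≠ 0 ∧
      algebraMap F K (f / a1 ^ ε) = kt * σ kt := by
  obtain ⟨k, khat, hk, hkhat, hf⟩ := hnorm
  have hσσ : ∀ x, σ (σ x) = x := by
    refine σ.apply_apply_eq_self_of_span hsp ?_
    simp [hσ1, hσ2]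
  have hfix : σ (k * σ k * khat ^ 2) = k * σ k * khat ^ 2 := by
    rw [← hf, AlgEquiv.commutes]
  rcases apply_eq_or_eq_neg_of_mul_apply_mul_sq_fixed σ hσσ hk hfix with hc | hc
  · refine ⟨k * khat, 0, zero_le_one, mul_ne_zero hk hkhat, ?_⟩
    rw [pow_zero, div_one, hf, map_mul, hc]
    ring
  · have hs1ne : s1 ≠ 0 := by
      rintro rfl
      exact ha1 (by simpa using hs1.symm)
    refine ⟨k * khat / s1, 1, le_rfl, div_ne_zero (mul_ne_zero hk hkhat) hs1ne, ?_⟩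
    rw [pow_one, map_div₀, hf, ← hs1, map_div₀, map_mul, hc, hσ1]
    field_simp

/-- If f ∈ F× equals a norm from K to K₃ = F(√a₁a₂) times a square of K,
then f/a₁^ε is a norm from K to K₃ for some ε ∈ {0,1}. -/
theorem stmt_6 (F K : Type*) [Field F] [Field K] [Algebra F K]
    (hchar : (2 : F) ≠ 0) (a1 a2 : F) (ha1 : a1 ≠ 0) (ha2 : a2 ≠ 0)
    (s1 s2 : K) (hs1 : s1 ^ 2 = algebraMap F K a1) (hs2 : s2 ^ 2 = algebraMap F K a2)
    (hli : LinearIndependent F ![(1 : K), s1, s2, s1 * s2])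
    (hsp : Submodule.span F ({1, s1, s2, s1 * s2} : Set K) = ⊤)
    (σ : K ≃ₐ[F] K) (hσ1 : σ s1 = -s1) (hσ2 : σ s2 = -s2)
    (f : F) (hf : f ≠ 0)
    (hnorm : ∃ k khat : K, k ≠ 0 ∧ khat ≠ 0 ∧
      algebraMap F K f = k * σ k * khat ^ 2) :
    ∃ (kt : K) (ε : ℕ), ε ≤ 1 ∧ kt ≠ 0 ∧
      algebraMap F K (f / a1 ^ ε) = kt * σ kt :=
  stmt_6_general F K a1 ha1 s1 s2 hs1 hsp σ hσ1 hσ2 f hnorm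
end

section
/- Let F be a field of characteristic ≠ 2 and K₁ = F(√a₁) a quadratic extension. If K₁/F embeds in a cyclic extension of degree 4 (i.e., there is a field L ⊇ K₁ with L/F Galois and Gal(L/F) ≅ Z/4Z), then −1 is a norm from K₁, i.e., −1 ∈ N_{K₁/F}(K₁×); consequently a₁ ∈ N_{K₁/F}(K₁×). -/
/-!
Let `σ` generate `Gal(L/F) ≅ ℤ/4`. Since `a₁` is not a square, `σ s = -s`, and the fixed field of
`σ²` is `K₁ = F(s)`. As `σ² ≠ 1` is an involution, some `w ≠ 0` has `σ² w = -w`. Then `β = w²` lies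
in `K₁` and `u = w σ(w)` satisfies `σ u = -u`, so `u = d s` with `d ∈ F×`. Hence
`N(β) = β σ(β) = u² = d² a₁`, so `a₁ = N(β / d)`, and `-1 = a₁ / N(s)` is a norm as well.
-/

namespace CyclicQuartic

theorem exists_generator_orderOf_eq {G : Type*} [Group G] {n : ℕ}
    (e : G ≃* Multiplicative (ZMod n)) :
    ∃ σ : G, (∀ g, g ∈ Subgroup.zpowers σ) ∧ orderOf σ = n := by
  have := e.symm.isCyclic.mp inferInstance
  obtain ⟨σ, hσ⟩ := IsCyclic.exists_generator (α := G)
  refine ⟨σ, hσ, ?_⟩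
  rw [orderOf_eq_card_of_forall_mem_zpowers hσ, Nat.card_congr (e.toEquiv.trans Multiplicative.toAdd),
    Nat.card_zmod]

variable {F L : Type*} [Field F] [Field L] [Algebra F L]

-- The witness is `(x + y√a) / √a`, whose norm is `a / N(√a) = -1`.
theorem exists_sq_sub_mul_sq_eq_neg_one {a : F} (ha : a ≠ 0)
    (h : ∃ x y : F, x ^ 2 - a * y ^ 2 = a) : ∃ x y : F, x ^ 2 - a * y ^ 2 = -1 := by
  obtain ⟨x, y, hxy⟩ := h
  refine ⟨y, x / a, ?_⟩
  field_simp
  linear_combination -hxy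

theorem exists_ne_zero_apply_eq_neg {τ : L ≃ₐ[F] L} (hτ : τ ^ 2 = 1) (hne : τ ≠ 1) :
    ∃ w : L, w ≠ 0 ∧ τ w = -w := by
  obtain ⟨v, hv⟩ : ∃ v, τ v ≠ v := by
    by_contra! h
    exact hne (AlgEquiv.ext h)
  have hττ : τ (τ v) = v := by rw [← AlgEquiv.mul_apply, ← pow_two, hτ]; rfl
  exact ⟨v - τ v, sub_ne_zero.mpr hv.symm, by rw [map_sub, hττ, neg_sub]⟩

section Generator

variable [IsGalois F L] {σ : L ≃ₐ[F] L} (hσ : ∀ g, g ∈ Subgroup.zpowers σ)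
include hσ

theorem mem_range_algebraMap_of_apply_eq_self {x : L} (hx : σ x = x) :
    x ∈ Set.range (algebraMap F L) := by
  have hstab : Subgroup.zpowers σ ≤ MulAction.stabilizer (L ≃ₐ[F] L) x :=
    Subgroup.zpowers_le.mpr hx
  exact (InfiniteGalois.mem_range_algebraMap_iff_fixed x).mpr fun g ↦ hstab (hσ g)

theorem apply_eq_neg_of_sq_eq_algebraMap {a : F} (hns : ¬ ∃ g : F, a = g ^ 2) {s : L}
    (hs : s ^ 2 = algebraMap F L a) : σ s = -s := by
  have hsq : σ s ^ 2 = s ^ 2 := by rw [← map_pow, hs, AlgEquiv.commutes]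
  rcases sq_eq_sq_iff_eq_or_eq_neg.mp hsq with h | h
  · obtain ⟨g, rfl⟩ := mem_range_algebraMap_of_apply_eq_self hσ h
    exact absurd ⟨g, (algebraMap F L).injective (by rw [map_pow, hs])⟩ hns
  · exact h

theorem exists_eq_algebraMap_add_algebraMap_mul (h2 : (2 : L) ≠ 0) {s : L} (hs0 : s ≠ 0)
    (hσs : σ s = -s) {z : L} (hz : σ (σ z) = z) :
    ∃ x y : F, z = algebraMap F L x + algebraMap F L y * s := by
  obtain ⟨x, hx⟩ := mem_range_algebraMap_of_apply_eq_self hσ (x := (z + σ z) / 2)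
    (by rw [map_div₀, map_add, hz, map_ofNat, add_comm])
  obtain ⟨y, hy⟩ := mem_range_algebraMap_of_apply_eq_self hσ (x := (z - σ z) / (2 * s))
    (by rw [map_div₀, map_sub, hz, map_mul, map_ofNat, hσs]; field_simp; ring)
  exact ⟨x, y, by rw [hx, hy]; field_simp; ring⟩

theorem exists_sq_sub_mul_sq_eq_self (hσ4 : orderOf σ = 4) (h2 : (2 : L) ≠ 0) {a : F}
    (hns : ¬ ∃ g : F, a = g ^ 2) {s : L} (hs : s ^ 2 = algebraMap F L a) :
    ∃ x y : F, x ^ 2 - a * y ^ 2 = a := by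
  have hs0 : s ≠ 0 := by
    rintro rfl
    exact hns ⟨0, by simpa using hs.symm⟩
  have hσs := apply_eq_neg_of_sq_eq_algebraMap hσ hns hs
  obtain ⟨w, hw0, hσσw⟩ := exists_ne_zero_apply_eq_neg (τ := σ ^ 2)
    (by rw [← pow_mul, show 2 * 2 = orderOf σ from hσ4.symm, pow_orderOf_eq_one])
    (pow_ne_one_of_lt_orderOf (by norm_num) (by omega))
  rw [pow_two, AlgEquiv.mul_apply] at hσσw
  obtain ⟨x, y, hβ⟩ := exists_eq_algebraMap_add_algebraMap_mul hσ h2 hs0 hσs (z := w ^ 2)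
    (by rw [map_pow, map_pow, hσσw, neg_sq])
  obtain ⟨d, hd⟩ := mem_range_algebraMap_of_apply_eq_self hσ (x := w * σ w / s)
    (by rw [map_div₀, map_mul, hσσw, hσs]; ring)
  have hd0 : d ≠ 0 := by
    rintro rfl
    rw [map_zero, eq_comm, div_eq_zero_iff, mul_eq_zero, map_eq_zero_iff _ σ.injective] at hd
    tauto
  have hσβ : σ (w ^ 2) = algebraMap F L x - algebraMap F L y * s := by
    rw [hβ, map_add, map_mul, AlgEquiv.commutes, AlgEquiv.commutes, hσs]
    ring
  have hnorm : algebraMap F L (x ^ 2 - a * y ^ 2) = algebraMap F L (d ^ 2 * a) :=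
    calc algebraMap F L (x ^ 2 - a * y ^ 2) = w ^ 2 * σ (w ^ 2) := by
          rw [hσβ, hβ, map_sub, map_mul, map_pow, map_pow]
          linear_combination (algebraMap F L y) ^ 2 * hs
      _ = (w * σ w / s) ^ 2 * s ^ 2 := by field_simp; rw [map_pow]
      _ = algebraMap F L (d ^ 2 * a) := by rw [← hd, hs, map_mul, map_pow]
  refine ⟨x / d, y / d, ?_⟩
  field_simp
  linear_combination (algebraMap F L).injective hnorm

end Generator

end CyclicQuartic

open CyclicQuartic in
/-- If the quadratic extension K₁ = F(√a₁) embeds in a cyclic degree-4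
extension L/F, then −1 (and hence a₁) is a norm from K₁. -/
theorem stmt_8 (F L : Type*) [Field F] [Field L] [Algebra F L]
    (hchar : (2 : F) ≠ 0) (a1 : F) (ha1 : a1 ≠ 0)
    (hns : ¬ ∃ g : F, a1 = g ^ 2)
    (s : L) (hs : s ^ 2 = algebraMap F L a1)
    (hGal : IsGalois F L)
    (hcyc : Nonempty ((L ≃ₐ[F] L) ≃* Multiplicative (ZMod 4))) :
    (∃ x y : F, x ^ 2 - a1 * y ^ 2 = -1) ∧
    (∃ x y : F, x ^ 2 - a1 * y ^ 2 = a1) := by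
  obtain ⟨e⟩ := hcyc
  obtain ⟨σ, hσ, hσ4⟩ := exists_generator_orderOf_eq e
  have h2 : (2 : L) ≠ 0 := by
    simpa only [map_ofNat] using (map_ne_zero (algebraMap F L)).mpr hchar
  have ha1_norm := exists_sq_sub_mul_sq_eq_self hσ hσ4 h2 hns hs
  exact ⟨exists_sq_sub_mul_sq_eq_neg_one ha1 ha1_norm, ha1_norm⟩
end

section
/- Let F be a field of characteristic ≠ 2, K = F(√a₁,√a₂) biquadratic over F with Galois group generated by σ₁, σ₂ (σᵢ(√aⱼ) = (−1)^{δᵢⱼ}√aⱼ), and let γ ∈ K× with [γ] ∈ (K×/K^{×2}) fixed by Gal(K/F). Let σ̂₂ ∈ Gal(K(√γ)/F) be any lift of σ₂. Then σ̂₂² = id if and only if N_{K/K₁}(γ) = γ·σ₂(γ) is a square in K₁×, where K₁ = F(√a₁). -/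
/-! Since the class of `γ` is `σ₂`-stable, `σ₂ γ = γ k²` for some `k ∈ K`. Any lift `σ̂₂` sends
`√γ` to `±k√γ`, so `σ̂₂²` sends `√γ` to `σ₂(k) k √γ` and is the identity iff `σ₂(k) k = 1`.
Since `γ σ₂(γ) = (γk)²` and `σ₂(γk) = γk · σ₂(k) k`, this says exactly that `γ σ₂(γ)` is the
square of a `σ₂`-fixed element (if `γ σ₂(γ) = d²` with `d` fixed, then `γk = ±d` is fixed too),
and the fixed field of `σ₂` is `F(√a₁) = F + F √a₁`. -/

theorem AlgEquiv.mul_self_eq_one_of_span_eq_top {R A : Type*} [CommSemiring R] [Semiring A]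
    [Algebra R A] {s : Set A} (hs : Submodule.span R s = ⊤) (σ : A ≃ₐ[R] A)
    (h : ∀ x ∈ s, σ (σ x) = x) : σ * σ = 1 := by
  have hlin : (σ * σ).toLinearMap = LinearMap.id := LinearMap.ext_on hs h
  ext x
  exact LinearMap.congr_fun hlin x

section Biquadratic

variable {F K : Type*} [Field F] [Field K] [Algebra F K] {s1 s2 : K}

theorem biquadratic_mul_self_eq_one (hsp : Submodule.span F ({1, s1, s2, s1 * s2} : Set K) = ⊤)
    (σ : K ≃ₐ[F] K) (hσ1 : σ s1 = s1) (hσ2 : σ s2 = -s2) : σ * σ = 1 := by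
  refine σ.mul_self_eq_one_of_span_eq_top hsp fun x hx => ?_
  rcases hx with rfl | rfl | rfl | rfl <;> simp [hσ1, hσ2]

theorem biquadratic_fixed_iff (hchar : (2 : F) ≠ 0)
    (hli : LinearIndependent F ![(1 : K), s1, s2, s1 * s2])
    (hsp : Submodule.span F ({1, s1, s2, s1 * s2} : Set K) = ⊤)
    (σ : K ≃ₐ[F] K) (hσ1 : σ s1 = s1) (hσ2 : σ s2 = -s2) {c : K} :
    σ c = c ↔ ∃ u v : F, c = algebraMap F K u + algebraMap F K v * s1 := by
  constructor
  · intro hc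
    have hrange : Set.range ![(1 : K), s1, s2, s1 * s2] = {1, s1, s2, s1 * s2} := by
      simp only [Matrix.range_cons, Matrix.range_empty, Set.union_empty, Set.singleton_union]
    obtain ⟨f, hf⟩ := (Submodule.mem_span_range_iff_exists_fun F).mp
      (hrange ▸ hsp ▸ Submodule.mem_top : c ∈ Submodule.span F (Set.range _))
    simp only [Fin.sum_univ_four, Matrix.cons_val, Algebra.smul_def, mul_one] at hf
    have hσf := congrArg σ hf
    simp only [map_add, map_mul, AlgEquiv.commutes, hσ1, hσ2, hc] at hσf
    -- `c - σ c = 2 f₂ s₂ + 2 f₃ s₁ s₂`, so independence kills `f₂` and `f₃`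
    have hzero := Fintype.linearIndependent_iff.mp hli ![0, 0, 2 * f 2, 2 * f 3] (by
      simp only [Fin.sum_univ_four, Matrix.cons_val, Algebra.smul_def, mul_one, map_zero,
        map_mul, map_ofNat]
      linear_combination hf - hσf)
    have hf2 : f 2 = 0 := by simpa [hchar] using hzero 2
    have hf3 : f 3 = 0 := by simpa [hchar] using hzero 3
    exact ⟨f 0, f 1, by simpa [hf2, hf3] using hf.symm⟩
  · rintro ⟨u, v, rfl⟩
    simp [hσ1]

end Biquadratic

theorem AlgEquiv.mul_self_eq_one_iff_exists_fixed_sq {R K : Type*} [CommSemiring R] [Field K]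
    [Algebra R K] {τ : K ≃ₐ[R] K} {γ k : K} (hγ : γ ≠ 0) (hk : τ γ = γ * k ^ 2) :
    τ k * k = 1 ↔ ∃ d, τ d = d ∧ γ * τ γ = d ^ 2 := by
  have hk0 : k ≠ 0 := by
    rintro rfl
    exact hγ (τ.injective (by simpa using hk))
  have hτγk : τ (γ * k) = γ * k * (τ k * k) := by rw [map_mul, hk]; ring
  have hsq : γ * τ γ = (γ * k) ^ 2 := by rw [hk]; ring
  constructor
  · intro h
    exact ⟨γ * k, by rw [hτγk, h, mul_one], hsq⟩
  · rintro ⟨d, hd, hγd⟩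
    have hfixed : τ (γ * k) = γ * k := by
      rcases sq_eq_sq_iff_eq_or_eq_neg.mp (hsq.symm.trans hγd) with h | h <;> simp [h, hd]
    rw [hτγk] at hfixed
    exact mul_left_cancel₀ (mul_ne_zero hγ hk0) (hfixed.trans (mul_one _).symm)

theorem AlgEquiv.eq_one_of_adjoin_singleton_eq_top {F K L : Type*} [CommSemiring F] [Field K]
    [Field L] [Algebra F L] [Algebra K L] {t : L} (hadj : Algebra.adjoin K {t} = ⊤)
    (φ : L ≃ₐ[F] L) (hK : ∀ x, φ (algebraMap K L x) = algebraMap K L x) (ht : φ t = t) :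
    φ = 1 := by
  ext x
  induction (hadj ▸ Algebra.mem_top : x ∈ Algebra.adjoin K {t}) using Algebra.adjoin_induction with
  | mem y hy => rw [Set.mem_singleton_iff.mp hy, ht, AlgEquiv.one_apply]
  | algebraMap r => rw [hK, AlgEquiv.one_apply]
  | add a b _ _ ha hb => simp only [map_add, ha, hb]
  | mul a b _ _ ha hb => simp only [map_mul, ha, hb]

section KummerLift

variable {F K L : Type*} [CommSemiring F] [Field K] [Field L] [Algebra F K] [Algebra F L]
  [Algebra K L] {τ : K ≃ₐ[F] K} {σ : L ≃ₐ[F] L} {γ k : K} {t : L}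

theorem lift_apply_root_eq_or_eq_neg (ht : t ^ 2 = algebraMap K L γ)
    (hlift : ∀ x, σ (algebraMap K L x) = algebraMap K L (τ x)) (hk : τ γ = γ * k ^ 2) :
    σ t = algebraMap K L k * t ∨ σ t = -(algebraMap K L k * t) := by
  refine sq_eq_sq_iff_eq_or_eq_neg.mp ?_
  rw [← map_pow, ht, hlift, hk, mul_pow, ht, map_mul, map_pow, mul_comm]

theorem lift_mul_self_apply_root (ht : t ^ 2 = algebraMap K L γ)
    (hlift : ∀ x, σ (algebraMap K L x) = algebraMap K L (τ x)) (hk : τ γ = γ * k ^ 2) :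
    (σ * σ) t = algebraMap K L (τ k * k) * t := by
  rw [AlgEquiv.mul_apply]
  rcases lift_apply_root_eq_or_eq_neg ht hlift hk with h | h
  · rw [h, map_mul, hlift, h, map_mul]; ring
  · rw [h, map_neg, map_mul, hlift, h, map_mul]; ring

theorem lift_mul_self_eq_one_iff (hγ : γ ≠ 0) (hτ : τ * τ = 1) (ht : t ^ 2 = algebraMap K L γ)
    (hadj : Algebra.adjoin K {t} = ⊤)
    (hlift : ∀ x, σ (algebraMap K L x) = algebraMap K L (τ x)) (hk : τ γ = γ * k ^ 2) :
    σ * σ = 1 ↔ τ k * k = 1 := by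
  have hσσt := lift_mul_self_apply_root ht hlift hk
  constructor
  · intro h
    have ht0 : t ≠ 0 := by
      rintro rfl
      exact hγ (by simpa using ht.symm)
    rw [h, AlgEquiv.one_apply] at hσσt
    exact (algebraMap K L).injective (by simpa using (mul_eq_right₀ ht0).mp hσσt.symm)
  · intro h
    refine AlgEquiv.eq_one_of_adjoin_singleton_eq_top hadj _ (fun x => ?_) (by simp [hσσt, h])
    rw [AlgEquiv.mul_apply, hlift, hlift, ← AlgEquiv.mul_apply, hτ, AlgEquiv.one_apply]

end KummerLift

theorem stmt_10_general (F K L : Type*) [Field F] [Field K] [Field L]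
    [Algebra F K] [Algebra K L] [Algebra F L]
    (hchar : (2 : F) ≠ 0)
    (s1 s2 : K)
    (hli : LinearIndependent F ![(1 : K), s1, s2, s1 * s2])
    (hsp : Submodule.span F ({1, s1, s2, s1 * s2} : Set K) = ⊤)
    (σ2 : K ≃ₐ[F] K) (hσ2s1 : σ2 s1 = s1) (hσ2s2 : σ2 s2 = -s2)
    (γ : K) (hγ : γ ≠ 0)
    (hfix : ∀ σ : K ≃ₐ[F] K, ∃ k : K, σ γ = γ * k ^ 2)
    (t : L) (ht : t ^ 2 = algebraMap K L γ)
    (hadj : Algebra.adjoin K ({t} : Set L) = ⊤)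
    (σh : L ≃ₐ[F] L)
    (hlift : ∀ k : K, σh (algebraMap K L k) = algebraMap K L (σ2 k)) :
    σh * σh = 1 ↔
      ∃ u v : F, γ * σ2 γ = (algebraMap F K u + algebraMap F K v * s1) ^ 2 := by
  obtain ⟨k, hk⟩ := hfix σ2
  have hσ2σ2 := biquadratic_mul_self_eq_one hsp σ2 hσ2s1 hσ2s2
  have hfixed := fun c => biquadratic_fixed_iff (c := c) hchar hli hsp σ2 hσ2s1 hσ2s2
  rw [lift_mul_self_eq_one_iff hγ hσ2σ2 ht hadj hlift hk,
    AlgEquiv.mul_self_eq_one_iff_exists_fixed_sq hγ hk]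
  constructor
  · rintro ⟨d, hd, hsq⟩
    obtain ⟨u, v, rfl⟩ := (hfixed d).mp hd
    exact ⟨u, v, hsq⟩
  · rintro ⟨u, v, hsq⟩
    exact ⟨_, (hfixed _).mpr ⟨u, v, rfl⟩, hsq⟩

/-- For γ ∈ K× with class fixed by Gal(K/F), a lift σ̂₂ of σ₂ to
Gal(K(√γ)/F) satisfies σ̂₂² = id iff N_{K/K₁}(γ) = γ·σ₂(γ) is a square
in K₁ = F(√a₁). -/
theorem stmt_10 (F K L : Type*) [Field F] [Field K] [Field L]
    [Algebra F K] [Algebra K L] [Algebra F L] [IsScalarTower F K L]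
    (hchar : (2 : F) ≠ 0) (a1 a2 : F)
    (s1 s2 : K) (hs1 : s1 ^ 2 = algebraMap F K a1) (hs2 : s2 ^ 2 = algebraMap F K a2)
    (hli : LinearIndependent F ![(1 : K), s1, s2, s1 * s2])
    (hsp : Submodule.span F ({1, s1, s2, s1 * s2} : Set K) = ⊤)
    (σ2 : K ≃ₐ[F] K) (hσ2s1 : σ2 s1 = s1) (hσ2s2 : σ2 s2 = -s2)
    (γ : K) (hγ : γ ≠ 0) (hns : ¬ ∃ k : K, γ = k ^ 2)
    (hfix : ∀ σ : K ≃ₐ[F] K, ∃ k : K, σ γ = γ * k ^ 2)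
    (t : L) (ht : t ^ 2 = algebraMap K L γ)
    (hadj : Algebra.adjoin K ({t} : Set L) = ⊤)
    (σh : L ≃ₐ[F] L)
    (hlift : ∀ k : K, σh (algebraMap K L k) = algebraMap K L (σ2 k)) :
    σh * σh = 1 ↔
      ∃ u v : F, γ * σ2 γ = (algebraMap F K u + algebraMap F K v * s1) ^ 2 :=
  stmt_10_general F K L hchar s1 s2 hli hsp σ2 hσ2s1 hσ2s2 γ hγ hfix t ht hadj σh hlift
end

section
/- Let F be a field of characteristic ≠ 2, K = F(√a₁,√a₂) biquadratic over F with K₁ = F(√a₁), K₂ = F(√a₂), K₃ = F(√(a₁a₂)). Define T on the subgroup of Gal(K/F)-fixed classes in K×/K^{×2} by T([γ]) = ([N_{K/K₁}(γ)], [N_{K/K₂}(γ)], [N_{K/K₃}(γ)]) with values in the product of the groups (Kᵢ× ∩ K^{×2})/Kᵢ^{×2}. Then the kernel of T is exactly the image of F× in K×/K^{×2}. -/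
/-!
If `γ = f k²`, each norm `γ ρ(γ)` is `(f k ρ(k))²` with `k ρ(k)` in the fixed field of `ρ`.
Conversely, write `σ₁ γ = γ α²`. The condition on `K₂` makes `γ α` fixed by `σ₁`, so
`α σ₁(α) = 1` and Hilbert 90 gives `γ = δ e²` with `δ ∈ K₂`. The conditions on `K₁` and `K₃` say
that `n = N_{K₂/F}(δ)` is a square in `K₁` and in `K₃`, i.e. `n ∈ F² ∪ a₁F²` and
`n ∈ F² ∪ a₁a₂F²`; as `a₂` is not a square, `n = u²` with `u ∈ F`, and Hilbert 90 for `K₂/F`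
puts `δ` in `F^× K^{×2}`.
-/

open Submodule

theorem mem_span_of_apply_eq_self {F V : Type*} [Field F] [AddCommGroup V] [Module F V]
    (h2 : (2 : F) ≠ 0) (τ : V →ₗ[F] V) {P N : Set V} (hspan : span F (P ∪ N) = ⊤)
    (hP : ∀ v ∈ P, τ v = v) (hN : ∀ v ∈ N, τ v = -v) {x : V} (hx : τ x = x) :
    x ∈ span F P := by
  have hsum : ∀ y, y + τ y ∈ span F P := by
    intro y
    have hy : y ∈ span F (P ∪ N) := hspan ▸ mem_top
    induction hy using span_induction with
    | mem v hv =>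
      rcases hv with hv | hv
      · rw [hP v hv]
        exact add_mem (subset_span hv) (subset_span hv)
      · rw [hN v hv, add_neg_cancel]
        exact zero_mem _
    | zero => simp
    | add y z _ _ hy hz =>
      rw [map_add, add_add_add_comm]
      exact add_mem hy hz
    | smul c y _ hy =>
      rw [map_smul, ← smul_add]
      exact smul_mem _ c hy
  have h2x := hsum x
  rwa [hx, ← two_smul F x, smul_mem_iff _ h2] at h2x

section

variable {F K G : Type*} [Field F] [Field K] [Algebra F K] [FunLike G K K]

section RingHomClass

variable [RingHomClass G K K]

-- Hilbert 90 for an involution: take `e = 1 + τ α`, or `e = s` when `α = -1`.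
theorem exists_ne_zero_apply_eq_mul {τ : G} (hτ : Function.Involutive τ) {s : K} (hs : s ≠ 0)
    (hτs : τ s = -s) {α : K} (hα : α * τ α = 1) : ∃ e, e ≠ 0 ∧ τ e = α * e := by
  by_cases hα1 : α = -1
  · exact ⟨s, hs, by rw [hτs, hα1, neg_one_mul]⟩
  · refine ⟨1 + τ α, fun h => hα1 ?_, ?_⟩
    · linear_combination α * h - hα
    · rw [map_add, map_one, hτ α]
      linear_combination -hα

theorem exists_apply_eq_self_and_eq_mul_sq {τ : G} (hτ : Function.Involutive τ) {s : K}
    (hs : s ≠ 0) (hτs : τ s = -s) {γ α w : K} (hγ : γ ≠ 0) (hα : τ γ = γ * α ^ 2)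
    (hw : γ * τ γ = w ^ 2) (hτw : τ w = w) : ∃ δ e, e ≠ 0 ∧ τ δ = δ ∧ γ = δ * e ^ 2 := by
  have hα0 : α ≠ 0 := by
    rintro rfl
    exact (map_ne_zero τ).mpr hγ (by simpa using hα)
  have hfix : τ (γ * α) = γ * α := by
    have : (γ * α - w) * (γ * α + w) = 0 := by linear_combination hw - γ * hα
    rcases mul_eq_zero.mp this with h | h
    · rw [sub_eq_zero.mp h, hτw]
    · rw [eq_neg_of_add_eq_zero_left h, map_neg, hτw]
  have hnorm : α * τ α = 1 := by
    rw [map_mul, hα] at hfix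
    exact mul_left_cancel₀ (mul_ne_zero hγ hα0) (by linear_combination hfix)
  obtain ⟨e, he, hτe⟩ := exists_ne_zero_apply_eq_mul hτ hs hτs hnorm
  refine ⟨γ / e ^ 2, e, he, ?_, by field_simp⟩
  rw [map_div₀, map_pow, hα, hτe]
  field_simp

theorem exists_apply_eq_self_and_sq_eq {ρ : G} (hρ : Function.Involutive ρ) {γ δ e w m : K}
    (he : e ≠ 0) (hγ : γ = δ * e ^ 2) (hδ : δ * ρ δ = m) (hw : γ * ρ γ = w ^ 2)
    (hρw : ρ w = w) : ∃ t, ρ t = t ∧ t ^ 2 = m := by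
  have hρe : ρ e ≠ 0 := (map_ne_zero ρ).mpr he
  refine ⟨w / (e * ρ e), ?_, ?_⟩
  · rw [map_div₀, map_mul, hρ e, hρw, mul_comm]
  · rw [div_pow, ← hw, hγ, ← hδ, map_mul, map_pow]
    field_simp

end RingHomClass

section AlgHomClass

variable [AlgHomClass G F K K]

theorem exists_eq_add_mul_of_apply_eq_self (h2 : (2 : F) ≠ 0)
    {s t t' : K} (hspan : span F ({1, s, t, t'} : Set K) = ⊤) (σ : G)
    (hs : σ s = s) (ht : σ t = -t) (ht' : σ t' = -t') {x : K} (hx : σ x = x) :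
    ∃ a b : F, x = algebraMap F K a + algebraMap F K b * s := by
  have hx' := mem_span_of_apply_eq_self h2 (AlgHomClass.toAlgHom σ).toLinearMap
    (P := {1, s}) (N := {t, t'}) (by rwa [Set.insert_union, Set.singleton_union])
    (by rintro v (rfl | rfl) <;> simp [hs]) (by rintro v (rfl | rfl) <;> simp [ht, ht']) hx
  obtain ⟨a, b, hab⟩ := mem_span_pair.mp hx'
  exact ⟨a, b, by rw [← hab, Algebra.smul_def, Algebra.smul_def, mul_one]⟩

-- Hilbert 90 for the norm `u²`: with `k = δ + u`, `δ k ρ(k) = u k²` and `k ρ(k) ∈ F`.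
theorem exists_eq_algebraMap_mul_sq (ρ : G) {δ : K} (hδ : δ ≠ 0)
    {u r : F} (hnorm : δ * ρ δ = algebraMap F K (u * u)) (htr : δ + ρ δ = algebraMap F K r) :
    ∃ f : F, f ≠ 0 ∧ ∃ k : K, δ = algebraMap F K f * k ^ 2 := by
  by_cases hδu : δ + algebraMap F K u = 0
  · exact ⟨-u, fun h => by simp_all, 1, by rw [map_neg]; linear_combination hδu⟩
  set k := δ + algebraMap F K u
  have hρk : ρ k ≠ 0 := (map_ne_zero ρ).mpr hδu
  rw [map_mul] at hnorm
  have hδk : δ * ρ k = algebraMap F K u * k := by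
    simp only [k, map_add, AlgHomClass.commutes]
    linear_combination hnorm
  have hk : k * ρ k = algebraMap F K (u * (2 * u + r)) := by
    simp only [k, map_add, AlgHomClass.commutes, map_mul, map_ofNat]
    linear_combination hnorm + algebraMap F K u * htr
  have hg : u * (2 * u + r) ≠ 0 := by
    rintro h
    rw [h, map_zero] at hk
    exact mul_ne_zero hδu hρk hk
  refine ⟨u / (u * (2 * u + r)), div_ne_zero (left_ne_zero_of_mul hg) hg, k, ?_⟩
  rw [map_div₀, ← hk, eq_comm]
  field_simp
  linear_combination -hδk

theorem exists_mul_apply_eq_sq {ρ : G} (hρ : Function.Involutive ρ)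
    {s : K} (hfix : ∀ x, ρ x = x → ∃ a b : F, x = algebraMap F K a + algebraMap F K b * s)
    (f : F) (k : K) : ∃ u v : F, algebraMap F K f * k ^ 2 * ρ (algebraMap F K f * k ^ 2) =
      (algebraMap F K u + algebraMap F K v * s) ^ 2 := by
  obtain ⟨a, b, hab⟩ := hfix (k * ρ k) (by rw [map_mul, hρ k, mul_comm])
  refine ⟨f * a, f * b, ?_⟩
  simp only [map_mul, map_pow, AlgHomClass.commutes]
  linear_combination
    (algebraMap F K f) ^ 2 * (k * ρ k + (algebraMap F K a + algebraMap F K b * s)) * hab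

end AlgHomClass

theorem not_isSquare_of_sq_eq_algebraMap {s : K} {c : F}
    (hli : LinearIndependent F ![1, s]) (hs : s ^ 2 = algebraMap F K c) : ¬IsSquare c := by
  rintro ⟨r, rfl⟩
  have : (s - algebraMap F K r) * (s + algebraMap F K r) = 0 := by
    rw [map_mul] at hs
    linear_combination hs
  rcases mul_eq_zero.mp this with h | h
  · have := LinearIndependent.pair_iff.mp hli r (-1) (by
      simp [Algebra.smul_def]; linear_combination -h)
    exact neg_ne_zero.mpr one_ne_zero this.2
  · have := LinearIndependent.pair_iff.mp hli r 1 (by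
      simp [Algebra.smul_def]; linear_combination h)
    exact one_ne_zero this.2

theorem isSquare_or_eq_mul_sq_of_sq_eq_algebraMap (h2 : (2 : F) ≠ 0) {s : K} {c : F}
    (hli : LinearIndependent F ![1, s]) (hs : s ^ 2 = algebraMap F K c) {a b n : F}
    (h : (algebraMap F K a + algebraMap F K b * s) ^ 2 = algebraMap F K n) :
    IsSquare n ∨ ∃ b, n = c * b ^ 2 := by
  obtain ⟨hn, hab⟩ := LinearIndependent.pair_iff.mp hli (a ^ 2 + c * b ^ 2 - n) (2 * a * b) (by
    simp only [Algebra.smul_def, map_sub, map_add, map_mul, map_pow, map_ofNat]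
    linear_combination h - algebraMap F K b ^ 2 * hs)
  rcases mul_eq_zero.mp hab with ha | rfl
  · rw [(mul_eq_zero.mp ha).resolve_left h2] at hn
    exact Or.inr ⟨b, by linear_combination -hn⟩
  · exact Or.inl ⟨a, by linear_combination -hn⟩

theorem isSquare_of_isSquare_or_eq_mul_sq {a1 a2 n : F} (hn : n ≠ 0) (ha2 : ¬IsSquare a2)
    (h1 : IsSquare n ∨ ∃ b, n = a1 * b ^ 2) (h3 : IsSquare n ∨ ∃ d, n = a1 * a2 * d ^ 2) :
    IsSquare n := by
  rcases h1 with h1 | ⟨b, rfl⟩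
  · exact h1
  rcases h3 with h3 | ⟨d, hd⟩
  · exact h3
  have hd0 : d ≠ 0 := by rintro rfl; simp [hd] at hn
  have hbd : b ^ 2 = a2 * d ^ 2 := mul_left_cancel₀ (left_ne_zero_of_mul hn) (by rw [hd]; ring)
  exact (ha2 ⟨b / d, by field_simp; linear_combination -hbd⟩).elim

end

structure IsBiquadratic {F K : Type*} [Field F] [Field K] [Algebra F K] (a1 a2 : F) (s1 s2 : K)
    (σ1 σ2 : K ≃ₐ[F] K) : Prop where
  two_ne_zero : (2 : F) ≠ 0
  sq_s1 : s1 ^ 2 = algebraMap F K a1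
  sq_s2 : s2 ^ 2 = algebraMap F K a2
  linearIndependent : LinearIndependent F ![(1 : K), s1, s2, s1 * s2]
  span_eq_top : span F ({1, s1, s2, s1 * s2} : Set K) = ⊤
  σ1_s1 : σ1 s1 = -s1
  σ1_s2 : σ1 s2 = s2
  σ2_s1 : σ2 s1 = s1
  σ2_s2 : σ2 s2 = -s2

namespace IsBiquadratic

variable {F K : Type*} [Field F] [Field K] [Algebra F K] {a1 a2 : F} {s1 s2 : K}
  {σ1 σ2 : K ≃ₐ[F] K}

theorem linearIndependent_one_s1 (hK : IsBiquadratic a1 a2 s1 s2 σ1 σ2) :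
    LinearIndependent F ![1, s1] := by
  convert hK.linearIndependent.comp ![0, 1] (by decide) using 1
  ext i; fin_cases i <;> rfl

theorem linearIndependent_one_s2 (hK : IsBiquadratic a1 a2 s1 s2 σ1 σ2) :
    LinearIndependent F ![1, s2] := by
  convert hK.linearIndependent.comp ![0, 2] (by decide) using 1
  ext i; fin_cases i <;> rfl

theorem linearIndependent_one_s1_mul_s2 (hK : IsBiquadratic a1 a2 s1 s2 σ1 σ2) :
    LinearIndependent F ![1, s1 * s2] := by
  convert hK.linearIndependent.comp ![0, 3] (by decide) using 1
  ext i; fin_cases i <;> rfl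

theorem sq_s1_mul_s2 (hK : IsBiquadratic a1 a2 s1 s2 σ1 σ2) :
    (s1 * s2) ^ 2 = algebraMap F K (a1 * a2) := by
  rw [mul_pow, hK.sq_s1, hK.sq_s2, map_mul]

theorem algEquiv_ext (hK : IsBiquadratic a1 a2 s1 s2 σ1 σ2) {τ τ' : K ≃ₐ[F] K}
    (h1 : τ s1 = τ' s1) (h2 : τ s2 = τ' s2) : τ = τ' :=
  AlgEquiv.toLinearMap_injective <| LinearMap.ext_on hK.span_eq_top <| by
    rintro x (rfl | rfl | rfl | rfl) <;> simp [h1, h2]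

theorem involutive_σ1 (hK : IsBiquadratic a1 a2 s1 s2 σ1 σ2) : Function.Involutive σ1 := by
  have : σ1 * σ1 = 1 := hK.algEquiv_ext (by simp [hK.σ1_s1]) (by simp [hK.σ1_s2])
  exact fun x => congr($this x)

theorem involutive_σ2 (hK : IsBiquadratic a1 a2 s1 s2 σ1 σ2) : Function.Involutive σ2 := by
  have : σ2 * σ2 = 1 := hK.algEquiv_ext (by simp [hK.σ2_s1]) (by simp [hK.σ2_s2])
  exact fun x => congr($this x)

theorem involutive_σ1_mul_σ2 (hK : IsBiquadratic a1 a2 s1 s2 σ1 σ2) :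
    Function.Involutive (σ1 * σ2) := by
  have : σ1 * σ2 * (σ1 * σ2) = 1 :=
    hK.algEquiv_ext (by simp [hK.σ1_s1, hK.σ2_s1]) (by simp [hK.σ1_s2, hK.σ2_s2])
  exact fun x => congr($this x)

theorem exists_eq_of_σ1_apply_eq_self (hK : IsBiquadratic a1 a2 s1 s2 σ1 σ2) {x : K}
    (hx : σ1 x = x) : ∃ a b : F, x = algebraMap F K a + algebraMap F K b * s2 :=
  exists_eq_add_mul_of_apply_eq_self hK.two_ne_zero (t := s1) (t' := s1 * s2)
    (by rw [Set.insert_comm s2 s1]; exact hK.span_eq_top) σ1 hK.σ1_s2 hK.σ1_s1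
    (by simp [hK.σ1_s1, hK.σ1_s2]) hx

theorem exists_eq_of_σ2_apply_eq_self (hK : IsBiquadratic a1 a2 s1 s2 σ1 σ2) {x : K}
    (hx : σ2 x = x) : ∃ a b : F, x = algebraMap F K a + algebraMap F K b * s1 :=
  exists_eq_add_mul_of_apply_eq_self hK.two_ne_zero hK.span_eq_top σ2 hK.σ2_s1 hK.σ2_s2
    (by simp [hK.σ2_s1, hK.σ2_s2]) hx

theorem exists_eq_of_σ1_mul_σ2_apply_eq_self (hK : IsBiquadratic a1 a2 s1 s2 σ1 σ2) {x : K}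
    (hx : (σ1 * σ2) x = x) : ∃ a b : F, x = algebraMap F K a + algebraMap F K b * (s1 * s2) :=
  exists_eq_add_mul_of_apply_eq_self hK.two_ne_zero (t := s1) (t' := s2)
    (by convert hK.span_eq_top using 2; ext; simp; tauto) (σ1 * σ2)
    (by simp [hK.σ1_s1, hK.σ1_s2, hK.σ2_s1, hK.σ2_s2]) (by simp [hK.σ1_s1, hK.σ2_s1])
    (by simp [hK.σ1_s2, hK.σ2_s2]) hx

theorem exists_eq_algebraMap_mul_sq_of_σ1_apply_eq_self (hK : IsBiquadratic a1 a2 s1 s2 σ1 σ2)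
    {δ e : K} (hδ : δ ≠ 0) (he : e ≠ 0) (hσ1δ : σ1 δ = δ)
    (h1 : ∃ u v : F, δ * e ^ 2 * σ2 (δ * e ^ 2) = (algebraMap F K u + algebraMap F K v * s1) ^ 2)
    (h3 : ∃ u v : F, δ * e ^ 2 * (σ1 * σ2) (δ * e ^ 2) =
      (algebraMap F K u + algebraMap F K v * (s1 * s2)) ^ 2) :
    ∃ f : F, f ≠ 0 ∧ ∃ k : K, δ = algebraMap F K f * k ^ 2 := by
  obtain ⟨u1, v1, h1⟩ := h1
  obtain ⟨u3, v3, h3⟩ := h3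
  obtain ⟨p, q, rfl⟩ := hK.exists_eq_of_σ1_apply_eq_self hσ1δ
  have hσ2 : σ2 (algebraMap F K p + algebraMap F K q * s2) =
      algebraMap F K p - algebraMap F K q * s2 := by
    simp [hK.σ2_s2, sub_eq_add_neg]
  have hσ1σ2 : (σ1 * σ2) (algebraMap F K p + algebraMap F K q * s2) =
      algebraMap F K p - algebraMap F K q * s2 := by
    rw [AlgEquiv.mul_apply, hσ2]
    simp [hK.σ1_s2]
  have hnorm : (algebraMap F K p + algebraMap F K q * s2) *
      (algebraMap F K p - algebraMap F K q * s2) = algebraMap F K (p ^ 2 - a2 * q ^ 2) := by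
    simp only [map_sub, map_mul, map_pow]
    linear_combination -(algebraMap F K q) ^ 2 * hK.sq_s2
  have hn : p ^ 2 - a2 * q ^ 2 ≠ 0 := by
    intro h
    rw [h, map_zero, ← hσ2] at hnorm
    exact mul_ne_zero hδ ((map_ne_zero σ2).mpr hδ) hnorm
  obtain ⟨t1, ht1, ht1n⟩ := exists_apply_eq_self_and_sq_eq hK.involutive_σ2 he rfl
    (hσ2 ▸ hnorm) h1 (by simp [hK.σ2_s1])
  obtain ⟨a, b, rfl⟩ := hK.exists_eq_of_σ2_apply_eq_self ht1
  obtain ⟨t3, ht3, ht3n⟩ := exists_apply_eq_self_and_sq_eq hK.involutive_σ1_mul_σ2 he rfl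
    (hσ1σ2 ▸ hnorm) h3 (by simp [hK.σ1_s1, hK.σ1_s2, hK.σ2_s1, hK.σ2_s2])
  obtain ⟨c, d, rfl⟩ := hK.exists_eq_of_σ1_mul_σ2_apply_eq_self ht3
  obtain ⟨u, hu⟩ := isSquare_of_isSquare_or_eq_mul_sq hn
    (not_isSquare_of_sq_eq_algebraMap hK.linearIndependent_one_s2 hK.sq_s2)
    (isSquare_or_eq_mul_sq_of_sq_eq_algebraMap hK.two_ne_zero hK.linearIndependent_one_s1
      hK.sq_s1 ht1n)
    (isSquare_or_eq_mul_sq_of_sq_eq_algebraMap hK.two_ne_zero hK.linearIndependent_one_s1_mul_s2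
      hK.sq_s1_mul_s2 ht3n)
  refine exists_eq_algebraMap_mul_sq σ2 hδ (r := 2 * p) (by rw [hσ2, hnorm, hu]) ?_
  rw [hσ2]
  simp only [map_mul, map_ofNat]
  ring

end IsBiquadratic

theorem stmt_11_general (F K : Type*) [Field F] [Field K] [Algebra F K]
    (hchar : (2 : F) ≠ 0) (a1 a2 : F)
    (s1 s2 : K) (hs1 : s1 ^ 2 = algebraMap F K a1) (hs2 : s2 ^ 2 = algebraMap F K a2)
    (hli : LinearIndependent F ![(1 : K), s1, s2, s1 * s2])
    (hsp : Submodule.span F ({1, s1, s2, s1 * s2} : Set K) = ⊤)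
    (σ1 σ2 : K ≃ₐ[F] K)
    (hσ1s1 : σ1 s1 = -s1) (hσ1s2 : σ1 s2 = s2)
    (hσ2s1 : σ2 s1 = s1) (hσ2s2 : σ2 s2 = -s2)
    (γ : K) (hγ : γ ≠ 0)
    (hfix1 : ∃ k : K, σ1 γ = γ * k ^ 2) :
    ((∃ u v : F, γ * σ2 γ = (algebraMap F K u + algebraMap F K v * s1) ^ 2) ∧
     (∃ u v : F, γ * σ1 γ = (algebraMap F K u + algebraMap F K v * s2) ^ 2) ∧
     (∃ u v : F, γ * σ1 (σ2 γ) =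
        (algebraMap F K u + algebraMap F K v * (s1 * s2)) ^ 2)) ↔
    (∃ f : F, f ≠ 0 ∧ ∃ k : K, γ = algebraMap F K f * k ^ 2) := by
  have hK : IsBiquadratic a1 a2 s1 s2 σ1 σ2 :=
    ⟨hchar, hs1, hs2, hli, hsp, hσ1s1, hσ1s2, hσ2s1, hσ2s2⟩
  simp only [← AlgEquiv.mul_apply]
  constructor
  · rintro ⟨h1, ⟨u2, v2, h2⟩, h3⟩
    obtain ⟨α, hα⟩ := hfix1
    obtain ⟨δ, e, he, hσ1δ, rfl⟩ := exists_apply_eq_self_and_eq_mul_sq hK.involutive_σ1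
      (hK.linearIndependent_one_s1.ne_zero 1) hσ1s1 hγ hα h2 (by simp [hσ1s2])
    obtain ⟨f, hf, k, rfl⟩ := hK.exists_eq_algebraMap_mul_sq_of_σ1_apply_eq_self
      (left_ne_zero_of_mul hγ) he hσ1δ h1 h3
    exact ⟨f, hf, k * e, by ring⟩
  · rintro ⟨f, -, k, rfl⟩
    exact ⟨exists_mul_apply_eq_sq hK.involutive_σ2
        (fun _ => hK.exists_eq_of_σ2_apply_eq_self) f k,
      exists_mul_apply_eq_sq hK.involutive_σ1 (fun _ => hK.exists_eq_of_σ1_apply_eq_self) f k,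
      exists_mul_apply_eq_sq hK.involutive_σ1_mul_σ2
        (fun _ => hK.exists_eq_of_σ1_mul_σ2_apply_eq_self) f k⟩

/-- The kernel of T([γ]) = ([N_{K/K₁}γ], [N_{K/K₂}γ], [N_{K/K₃}γ]) on the
Gal(K/F)-fixed part of K×/K^{×2} is exactly the image of F×. -/
theorem stmt_11 (F K : Type*) [Field F] [Field K] [Algebra F K]
    (hchar : (2 : F) ≠ 0) (a1 a2 : F)
    (s1 s2 : K) (hs1 : s1 ^ 2 = algebraMap F K a1) (hs2 : s2 ^ 2 = algebraMap F K a2)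
    (hli : LinearIndependent F ![(1 : K), s1, s2, s1 * s2])
    (hsp : Submodule.span F ({1, s1, s2, s1 * s2} : Set K) = ⊤)
    (σ1 σ2 : K ≃ₐ[F] K)
    (hσ1s1 : σ1 s1 = -s1) (hσ1s2 : σ1 s2 = s2)
    (hσ2s1 : σ2 s1 = s1) (hσ2s2 : σ2 s2 = -s2)
    (γ : K) (hγ : γ ≠ 0)
    (hfix1 : ∃ k : K, σ1 γ = γ * k ^ 2) (hfix2 : ∃ k : K, σ2 γ = γ * k ^ 2) :
    ((∃ u v : F, γ * σ2 γ = (algebraMap F K u + algebraMap F K v * s1) ^ 2) ∧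
     (∃ u v : F, γ * σ1 γ = (algebraMap F K u + algebraMap F K v * s2) ^ 2) ∧
     (∃ u v : F, γ * σ1 (σ2 γ) =
        (algebraMap F K u + algebraMap F K v * (s1 * s2)) ^ 2)) ↔
    (∃ f : F, f ≠ 0 ∧ ∃ k : K, γ = algebraMap F K f * k ^ 2) :=
  stmt_11_general F K hchar a1 a2 s1 s2 hs1 hs2 hli hsp σ1 σ2 hσ1s1 hσ1s2 hσ2s1 hσ2s2 γ hγ hfix1
end

section
/- Let F be a field of characteristic ≠ 2 and K = F(√a₁,√a₂) biquadratic over F with Galois group generated by σ₁, σ₂. Suppose γ ∈ K× satisfies N_{K/F}(γ) ∈ K^{×2} (i.e., the class of γ·σ₁(γ)·σ₂(γ)·σ₁σ₂(γ) is trivial in K×/K^{×2}). Then N_{K/F}(γ) = f²·a₁^{ε₁}·a₂^{ε₂} for some f ∈ F× and ε₁, ε₂ ∈ {0,1}, and moreover the class of N_{K/K₂}(N_{K/K₁}(γ)) = N_{K/F}(γ) in (K₂× ∩ K^{×2})/K₂^{×2} equals [a₁]^{ε₁}. -/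
/-!
The norm `N = γ σ₁(γ) σ₂(γ) σ₁σ₂(γ)` is fixed by `σ₁` and `σ₂`, so if `N = k²` then each `σᵢ`
sends `k` to `±k`. Dividing `k` by the monomial `s₁^ε₁ s₂^ε₂` carrying the same signs leaves an
element fixed by both `σᵢ`, hence in `F` (its orbit sum is four times its coordinate on `1`).
Thus `k = f s₁^ε₁ s₂^ε₂` and `N = f² a₁^ε₁ a₂^ε₂ = a₁^ε₁ (f s₂^ε₂)²`.
-/

/-- The norm `N_{K/F}` of a biquadratic extension with Galois group `{1, σ1, σ2, σ1 σ2}`. -/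
def biquadNorm {R A : Type*} [CommSemiring R] [CommSemiring A] [Algebra R A]
    (σ1 σ2 : A ≃ₐ[R] A) (γ : A) : A :=
  γ * σ1 γ * σ2 γ * σ1 (σ2 γ)

section Norm

variable {R A : Type*} [CommSemiring R] [CommSemiring A] [Algebra R A] {σ1 σ2 : A ≃ₐ[R] A}

theorem map_biquadNorm_left (h1 : σ1 * σ1 = 1) (γ : A) :
    σ1 (biquadNorm σ1 σ2 γ) = biquadNorm σ1 σ2 γ := by
  have h (x : A) : σ1 (σ1 x) = x := by rw [← AlgEquiv.mul_apply, h1, AlgEquiv.one_apply]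
  simp only [biquadNorm, map_mul, h]
  ring

theorem map_biquadNorm_right (h2 : σ2 * σ2 = 1) (h12 : σ1 * σ2 = σ2 * σ1) (γ : A) :
    σ2 (biquadNorm σ1 σ2 γ) = biquadNorm σ1 σ2 γ := by
  have h (x : A) : σ2 (σ2 x) = x := by rw [← AlgEquiv.mul_apply, h2, AlgEquiv.one_apply]
  have hc (x : A) : σ2 (σ1 x) = σ1 (σ2 x) := by
    rw [← AlgEquiv.mul_apply, ← h12, AlgEquiv.mul_apply]
  simp only [biquadNorm, map_mul, h, hc]
  ring

end Norm

section Biquadratic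

variable {F K : Type*} [Field F] [Field K] [Algebra F K] {s1 s2 : K}

theorem exists_eq_linearCombination
    (hsp : Submodule.span F ({1, s1, s2, s1 * s2} : Set K) = ⊤) (x : K) :
    ∃ c0 c1 c2 c3 : F, x = algebraMap F K c0 + algebraMap F K c1 * s1
      + algebraMap F K c2 * s2 + algebraMap F K c3 * (s1 * s2) := by
  have hx : x ∈ Submodule.span F ({1, s1, s2, s1 * s2} : Set K) := hsp ▸ Submodule.mem_top
  simp only [Submodule.mem_span_insert, Submodule.mem_span_singleton] at hx
  obtain ⟨c0, -, ⟨c1, -, ⟨c2, -, ⟨c3, rfl⟩, rfl⟩, rfl⟩, rfl⟩ := hx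
  exact ⟨c0, c1, c2, c3, by simp only [Algebra.smul_def, mul_one]; ring⟩

theorem algEquiv_eq_of_apply_eq
    (hsp : Submodule.span F ({1, s1, s2, s1 * s2} : Set K) = ⊤) {σ τ : K ≃ₐ[F] K}
    (h1 : σ s1 = τ s1) (h2 : σ s2 = τ s2) : σ = τ := by
  refine AlgEquiv.toLinearMap_injective (LinearMap.ext_on hsp ?_)
  rintro x (rfl | rfl | rfl | rfl) <;> simp_all

theorem exists_algebraMap_eq_of_fixed (hchar : (2 : F) ≠ 0)
    (hsp : Submodule.span F ({1, s1, s2, s1 * s2} : Set K) = ⊤) {σ1 σ2 : K ≃ₐ[F] K}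
    (hσ1s1 : σ1 s1 = -s1) (hσ1s2 : σ1 s2 = s2) (hσ2s1 : σ2 s1 = s1) (hσ2s2 : σ2 s2 = -s2)
    {x : K} (h1 : σ1 x = x) (h2 : σ2 x = x) : ∃ c : F, x = algebraMap F K c := by
  obtain ⟨c0, c1, c2, c3, hx⟩ := exists_eq_linearCombination hsp x
  -- summing over the Galois group kills the coordinates along `s1`, `s2` and `s1 * s2`
  have orbit_sum : x + σ1 x + σ2 x + σ1 (σ2 x) = 4 * algebraMap F K c0 := by
    rw [hx]
    simp only [map_add, map_mul, map_neg, AlgEquiv.commutes, hσ1s1, hσ1s2, hσ2s1, hσ2s2]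
    ring
  have h4 : (4 : K) ≠ 0 := by
    have h2K : (2 : K) ≠ 0 := by
      simpa only [map_ofNat] using (map_ne_zero (algebraMap F K)).mpr hchar
    simpa [show (4 : K) = 2 * 2 by norm_num] using h2K
  refine ⟨c0, mul_left_cancel₀ h4 ?_⟩
  rw [← orbit_sum, h2, h1]
  ring

theorem exists_pow_neg_one_mul_of_map_sq {σ : K ≃ₐ[F] K} {k : K} (h : σ (k ^ 2) = k ^ 2) :
    ∃ e ≤ 1, σ k = (-1) ^ e * k := by
  rw [map_pow, sq_eq_sq_iff_eq_or_eq_neg] at h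
  rcases h with h | h
  · exact ⟨0, zero_le_one, by simp [h]⟩
  · exact ⟨1, le_rfl, by simp [h]⟩

theorem exists_eq_algebraMap_mul_of_sq_fixed (hchar : (2 : F) ≠ 0)
    (hli : LinearIndependent F ![(1 : K), s1, s2, s1 * s2])
    (hsp : Submodule.span F ({1, s1, s2, s1 * s2} : Set K) = ⊤) {σ1 σ2 : K ≃ₐ[F] K}
    (hσ1s1 : σ1 s1 = -s1) (hσ1s2 : σ1 s2 = s2) (hσ2s1 : σ2 s1 = s1) (hσ2s2 : σ2 s2 = -s2)
    {k : K} (h1 : σ1 (k ^ 2) = k ^ 2) (h2 : σ2 (k ^ 2) = k ^ 2) :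
    ∃ (c : F) (e1 e2 : ℕ), e1 ≤ 1 ∧ e2 ≤ 1 ∧ k = algebraMap F K c * s1 ^ e1 * s2 ^ e2 := by
  obtain ⟨e1, he1, hk1⟩ := exists_pow_neg_one_mul_of_map_sq h1
  obtain ⟨e2, he2, hk2⟩ := exists_pow_neg_one_mul_of_map_sq h2
  have hs1_ne : s1 ≠ 0 := by simpa using hli.ne_zero 1
  have hs2_ne : s2 ≠ 0 := by simpa using hli.ne_zero 2
  have ht : s1 ^ e1 * s2 ^ e2 ≠ 0 := by positivity
  obtain ⟨c, hc⟩ := exists_algebraMap_eq_of_fixed hchar hsp hσ1s1 hσ1s2 hσ2s1 hσ2s2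
    (x := k / (s1 ^ e1 * s2 ^ e2))
    (by simp only [map_div₀, map_mul, map_pow, hk1, hσ1s1, hσ1s2, neg_pow s1]; field_simp)
    (by simp only [map_div₀, map_mul, map_pow, hk2, hσ2s1, hσ2s2, neg_pow s2]; field_simp)
  exact ⟨c, e1, e2, he1, he2, by rw [mul_assoc, ← hc, div_mul_cancel₀ _ ht]⟩

end Biquadratic

/-- If N_{K/F}(γ) is a square in K, then N_{K/F}(γ) = f²a₁^{ε₁}a₂^{ε₂} with
f ∈ F×, ε ∈ {0,1}, and the class of N_{K/F}(γ) in (K₂× ∩ K^{×2})/K₂^{×2}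
is [a₁]^{ε₁}. -/
theorem stmt_13 (F K : Type*) [Field F] [Field K] [Algebra F K]
    (hchar : (2 : F) ≠ 0) (a1 a2 : F)
    (s1 s2 : K) (hs1 : s1 ^ 2 = algebraMap F K a1) (hs2 : s2 ^ 2 = algebraMap F K a2)
    (hli : LinearIndependent F ![(1 : K), s1, s2, s1 * s2])
    (hsp : Submodule.span F ({1, s1, s2, s1 * s2} : Set K) = ⊤)
    (σ1 σ2 : K ≃ₐ[F] K)
    (hσ1s1 : σ1 s1 = -s1) (hσ1s2 : σ1 s2 = s2)
    (hσ2s1 : σ2 s1 = s1) (hσ2s2 : σ2 s2 = -s2)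
    (γ : K) (hγ : γ ≠ 0)
    (hN : ∃ k : K, γ * σ1 γ * σ2 γ * σ1 (σ2 γ) = k ^ 2) :
    ∃ (f : F) (ε1 ε2 : ℕ), f ≠ 0 ∧ ε1 ≤ 1 ∧ ε2 ≤ 1 ∧
      γ * σ1 γ * σ2 γ * σ1 (σ2 γ) = algebraMap F K (f ^ 2 * a1 ^ ε1 * a2 ^ ε2) ∧
      ∃ u v : F, γ * σ1 γ * σ2 γ * σ1 (σ2 γ) =
        (algebraMap F K a1) ^ ε1 * (algebraMap F K u + algebraMap F K v * s2) ^ 2 := by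
  obtain ⟨k, hk⟩ := hN
  change biquadNorm σ1 σ2 γ = k ^ 2 at hk
  have hinv1 : σ1 * σ1 = 1 := algEquiv_eq_of_apply_eq hsp (by simp [hσ1s1]) (by simp [hσ1s2])
  have hinv2 : σ2 * σ2 = 1 := algEquiv_eq_of_apply_eq hsp (by simp [hσ2s1]) (by simp [hσ2s2])
  have hcomm : σ1 * σ2 = σ2 * σ1 :=
    algEquiv_eq_of_apply_eq hsp (by simp [hσ1s1, hσ2s1]) (by simp [hσ1s2, hσ2s2])
  obtain ⟨c, e1, e2, he1, he2, rfl⟩ := exists_eq_algebraMap_mul_of_sq_fixed hchar hli hsp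
    hσ1s1 hσ1s2 hσ2s1 hσ2s2 (hk ▸ map_biquadNorm_left hinv1 γ)
    (hk ▸ map_biquadNorm_right hinv2 hcomm γ)
  have hc : c ≠ 0 := by
    rintro rfl
    simp [biquadNorm, hγ] at hk
  have hsq : (algebraMap F K c * s1 ^ e1 * s2 ^ e2) ^ 2 =
      algebraMap F K a1 ^ e1 * (algebraMap F K c * s2 ^ e2) ^ 2 := by
    rw [mul_right_comm, mul_pow _ (s1 ^ e1), pow_right_comm, hs1, mul_comm]
  refine ⟨c, e1, e2, hc, he1, he2, hk.trans ?_, ?_⟩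
  · rw [hsq, mul_pow, pow_right_comm s2, hs2]
    simp only [map_mul, map_pow]
    ring
  · obtain rfl | rfl := Nat.le_one_iff_eq_zero_or_eq_one.mp he2
    · exact ⟨c, 0, hk.trans (hsq.trans (by simp))⟩
    · exact ⟨0, c, hk.trans (hsq.trans (by simp))⟩
end

section
/- There is no rational solution (x, y) ∈ Q² to the equation 5 = 13y² − x². Equivalently, there is no integral solution (u, v, w) ∈ Z³ with (u,v,w) ≠ (0,0,0) to 5u² = 13v² − w². -/
/-!
Reduce modulo a prime `p` modulo which `d` is not a square: `w² ≡ d v²` forces `p ∣ v` and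
`p ∣ w`, then `p² ∣ p u²` forces `p ∣ u`, and dividing by `p` gives a smaller solution of
`p u² = d v² - w²`. By this descent every power of `p` divides `u`, `v`, `w`, so they vanish.
A rational point of `p = d y² - x²` would give, after clearing denominators, a solution with
`u ≠ 0`. For `p = 5`, `d = 13 ≡ 3` is not a square mod `5`.
-/

section NonresidueDescent

variable {p : ℕ} [Fact p.Prime] {d : ℤ}

theorem dvd_and_dvd_of_dvd_mul_sq_sub_sq (hd : ¬IsSquare (d : ZMod p)) {v w : ℤ}
    (h : (p : ℤ) ∣ d * v ^ 2 - w ^ 2) : (p : ℤ) ∣ v ∧ (p : ℤ) ∣ w := by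
  simp only [← ZMod.intCast_zmod_eq_zero_iff_dvd] at h ⊢
  push_cast at h
  have hv : (v : ZMod p) = 0 := by
    by_contra hv
    exact hd ⟨w / v, by field_simp; linear_combination h⟩
  refine ⟨hv, ?_⟩
  rw [hv] at h
  exact pow_eq_zero_iff (n := 2) two_ne_zero |>.mp (by linear_combination -h)

theorem dvd_of_mul_sq_eq_mul_sq_sub_sq (hd : ¬IsSquare (d : ZMod p)) {u v w : ℤ}
    (h : p * u ^ 2 = d * v ^ 2 - w ^ 2) : (p : ℤ) ∣ u ∧ (p : ℤ) ∣ v ∧ (p : ℤ) ∣ w := by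
  obtain ⟨⟨b, rfl⟩, ⟨c, rfl⟩⟩ := dvd_and_dvd_of_dvd_mul_sq_sub_sq hd ⟨u ^ 2, h.symm⟩
  have hp : (p : ℤ) ≠ 0 := by exact_mod_cast (Fact.out : p.Prime).ne_zero
  have hu : u ^ 2 = p * (d * b ^ 2 - c ^ 2) :=
    mul_left_cancel₀ hp (by linear_combination h)
  exact ⟨(Nat.prime_iff_prime_int.mp Fact.out).dvd_of_dvd_pow ⟨_, hu⟩, dvd_mul_right _ _,
    dvd_mul_right _ _⟩

theorem pow_dvd_of_mul_sq_eq_mul_sq_sub_sq (hd : ¬IsSquare (d : ZMod p)) (k : ℕ) :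
    ∀ {u v w : ℤ}, p * u ^ 2 = d * v ^ 2 - w ^ 2 →
      (p : ℤ) ^ k ∣ u ∧ (p : ℤ) ^ k ∣ v ∧ (p : ℤ) ^ k ∣ w := by
  induction k with
  | zero => simp
  | succ k ih =>
    intro u v w h
    obtain ⟨⟨a, rfl⟩, ⟨b, rfl⟩, ⟨c, rfl⟩⟩ := dvd_of_mul_sq_eq_mul_sq_sub_sq hd h
    have hp : (p : ℤ) ^ 2 ≠ 0 := pow_ne_zero _ (by exact_mod_cast (Fact.out : p.Prime).ne_zero)
    have hsmaller : p * a ^ 2 = d * b ^ 2 - c ^ 2 :=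
      mul_left_cancel₀ hp (by linear_combination h)
    obtain ⟨ha, hb, hc⟩ := ih hsmaller
    simp only [pow_succ']
    exact ⟨mul_dvd_mul_left _ ha, mul_dvd_mul_left _ hb, mul_dvd_mul_left _ hc⟩

theorem Int.eq_zero_of_forall_pow_dvd {p : ℤ} (hp : p.natAbs ≠ 1) {u : ℤ}
    (h : ∀ k : ℕ, p ^ k ∣ u) : u = 0 := by
  by_contra hu
  obtain ⟨k, hk⟩ := Int.finiteMultiplicity_iff.mpr ⟨hp, hu⟩
  exact hk (h _)

theorem eq_zero_of_mul_sq_eq_mul_sq_sub_sq (hd : ¬IsSquare (d : ZMod p)) {u v w : ℤ}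
    (h : p * u ^ 2 = d * v ^ 2 - w ^ 2) : u = 0 ∧ v = 0 ∧ w = 0 := by
  have hp : (p : ℤ).natAbs ≠ 1 := by simpa using (Fact.out : p.Prime).ne_one
  have hdvd := fun k => pow_dvd_of_mul_sq_eq_mul_sq_sub_sq hd k h
  exact ⟨Int.eq_zero_of_forall_pow_dvd hp fun k => (hdvd k).1,
    Int.eq_zero_of_forall_pow_dvd hp fun k => (hdvd k).2.1,
    Int.eq_zero_of_forall_pow_dvd hp fun k => (hdvd k).2.2⟩

theorem not_exists_rat_eq_mul_sq_sub_sq (hd : ¬IsSquare (d : ZMod p)) :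
    ¬∃ x y : ℚ, (p : ℚ) = d * y ^ 2 - x ^ 2 := by
  rintro ⟨x, y, hxy⟩
  have hden : ((x.den * y.den : ℕ) : ℤ) ≠ 0 := by positivity
  refine hden (eq_zero_of_mul_sq_eq_mul_sq_sub_sq hd
    (v := y.num * x.den) (w := x.num * y.den) ?_).1
  have hx : (x.num : ℚ) = x * x.den := (Rat.mul_den_eq_num x).symm
  have hy : (y.num : ℚ) = y * y.den := (Rat.mul_den_eq_num y).symm
  qify
  rw [hx, hy]
  linear_combination ((x.den : ℚ) * y.den) ^ 2 * hxy

end NonresidueDescent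

/-- 5 = 13y² − x² has no rational solution; equivalently 5u² = 13v² − w²
has no nontrivial integral solution. -/
theorem stmt_15 :
    (¬ ∃ x y : ℚ, (5 : ℚ) = 13 * y ^ 2 - x ^ 2) ∧
    (¬ ∃ u v w : ℤ, ¬(u = 0 ∧ v = 0 ∧ w = 0) ∧ 5 * u ^ 2 = 13 * v ^ 2 - w ^ 2) := by
  have hd : ¬IsSquare ((13 : ℤ) : ZMod 5) := by decide
  have : Fact (Nat.Prime 5) := ⟨by norm_num⟩
  refine ⟨by exact_mod_cast not_exists_rat_eq_mul_sq_sub_sq hd, ?_⟩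
  rintro ⟨u, v, w, hne, h⟩
  exact hne (eq_zero_of_mul_sq_eq_mul_sq_sub_sq hd (by exact_mod_cast h))
end

section
/- Let G be the Klein four-group with generators σ₁, σ₂ and M a multiplicatively-written F₂[G]-module. Suppose elements b, c, γ₁, γ₂, γ₃ ∈ M satisfy γ₁^{1+σ₂} = 1, γ₁^{1+σ₁} = b, γ₂^{1+σ₂} = b, γ₂^{1+σ₁} = c, γ₃^{1+σ₂} = c, γ₃^{1+σ₁} = 1, and suppose b, c are F₂-linearly independent in M. Then the submodule generated by γ₁, γ₂, γ₃ has F₂-dimension 5 (and is isomorphic to the indecomposable module Ω² of dimension 5). -/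
/-!
Put `τᵢ = 1 + σᵢ`, the exponent `1 + σᵢ` of the relations. Since `σᵢ` is an involution and
`2 = 0`, `τᵢ² = 0`, so `τᵢ` kills everything in its image. Thus `τ₂` kills `b = τ₂ γ₂` and
`c = τ₂ γ₃` but not `γ₃`, which gives the independence of `γ₃, b, c`; and `τ₁` kills `γ₃, b, c`
while sending `γ₁, γ₂` to the independent pair `b, c`, which adds `γ₁, γ₂`.
-/

open Submodule Set

section ExtensionByKernel

variable {R M N : Type*} [Ring R] [AddCommGroup M] [Module R M] [AddCommGroup N] [Module R N]

theorem LinearIndependent.sumElim_of_comp_of_map_eq_zero {ι κ : Type*} {v : ι → M} {w : κ → M}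
    (f : M →ₗ[R] N) (hv : LinearIndependent R (f ∘ v)) (hw : LinearIndependent R w)
    (hfw : ∀ j, f (w j) = 0) : LinearIndependent R (Sum.elim v w) :=
  (hv.of_comp f).sum_type hw <|
    (range_ker_disjoint hv).mono_right (span_le.2 (range_subset_iff.2 hfw))

theorem LinearIndependent.finAppend_of_comp_of_map_eq_zero {m n : ℕ} {v : Fin m → M}
    {w : Fin n → M} (f : M →ₗ[R] N) (hv : LinearIndependent R (f ∘ v))
    (hw : LinearIndependent R w) (hfw : ∀ j, f (w j) = 0) :
    LinearIndependent R (Fin.append v w) := by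
  rw [← linearIndependent_equiv finSumFinEquiv]
  convert sumElim_of_comp_of_map_eq_zero f hv hw hfw using 1
  ext (i | j) <;> simp

end ExtensionByKernel

namespace Module.End

variable {W : Type*} [AddCommGroup W] [Module (ZMod 2) W] {σ : Module.End (ZMod 2) W}

theorem one_add_apply_of_eq_add {x y : W} (h : σ x = x + y) : (1 + σ) x = y := by
  rw [LinearMap.add_apply, one_apply, h, ← add_assoc, ZModModule.add_self, zero_add]

theorem one_add_apply_eq_zero_of_eq_add (hσ : ∀ x, σ (σ x) = x) {x y : W}
    (h : σ x = x + y) : (1 + σ) y = 0 := by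
  rw [← one_add_apply_of_eq_add h]
  simp only [LinearMap.add_apply, one_apply, map_add, hσ]
  rw [add_comm x, ZModModule.add_self]

end Module.End

open Module.End in
theorem stmt_17_general (W : Type*) [AddCommGroup W] [Module (ZMod 2) W]
    (σ1 σ2 : W →ₗ[ZMod 2] W)
    (hσ1 : ∀ x, σ1 (σ1 x) = x) (hσ2 : ∀ x, σ2 (σ2 x) = x)
    (b c γ1 γ2 γ3 : W)
    (h2 : σ1 γ1 = γ1 + b)
    (h3 : σ2 γ2 = γ2 + b) (h4 : σ1 γ2 = γ2 + c)
    (h5 : σ2 γ3 = γ3 + c) (h6 : σ1 γ3 = γ3)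
    (hbc : LinearIndependent (ZMod 2) ![b, c]) :
    LinearIndependent (ZMod 2) ![γ1, γ2, γ3, b, c] := by
  have hγ3bc : LinearIndependent (ZMod 2) ![γ3, b, c] := by
    rw [show ![γ3, b, c] = Fin.append ![γ3] ![b, c] by ext i; fin_cases i <;> rfl]
    refine .finAppend_of_comp_of_map_eq_zero (1 + σ2) (.of_subsingleton 0 ?_) hbc ?_
    · simpa [one_add_apply_of_eq_add h5] using hbc.ne_zero 1
    · intro j
      fin_cases j
      exacts [one_add_apply_eq_zero_of_eq_add hσ2 h3, one_add_apply_eq_zero_of_eq_add hσ2 h5]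
  have hτγ : ⇑(1 + σ1) ∘ ![γ1, γ2] = ![b, c] := by
    ext i
    fin_cases i
    exacts [one_add_apply_of_eq_add h2, one_add_apply_of_eq_add h4]
  rw [show ![γ1, γ2, γ3, b, c] = Fin.append ![γ1, γ2] ![γ3, b, c] by ext i; fin_cases i <;> rfl]
  refine .finAppend_of_comp_of_map_eq_zero (1 + σ1) (hτγ ▸ hbc) hγ3bc ?_
  intro j
  fin_cases j
  exacts [one_add_apply_of_eq_add (h6.trans (add_zero γ3).symm),
    one_add_apply_eq_zero_of_eq_add hσ1 h2, one_add_apply_eq_zero_of_eq_add hσ1 h4]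

/-- If b, c, γ₁, γ₂, γ₃ satisfy the Ω² relations and b, c are F₂-linearly
independent, then the submodule generated by γ₁, γ₂, γ₃ has dimension 5,
i.e. {γ₁, γ₂, γ₃, b, c} is linearly independent over F₂. -/
theorem stmt_17 (W : Type*) [AddCommGroup W] [Module (ZMod 2) W]
    (σ1 σ2 : W →ₗ[ZMod 2] W)
    (hσ1 : ∀ x, σ1 (σ1 x) = x) (hσ2 : ∀ x, σ2 (σ2 x) = x)
    (hcomm : ∀ x, σ1 (σ2 x) = σ2 (σ1 x))
    (b c γ1 γ2 γ3 : W)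
    (h1 : σ2 γ1 = γ1) (h2 : σ1 γ1 = γ1 + b)
    (h3 : σ2 γ2 = γ2 + b) (h4 : σ1 γ2 = γ2 + c)
    (h5 : σ2 γ3 = γ3 + c) (h6 : σ1 γ3 = γ3)
    (hbc : LinearIndependent (ZMod 2) ![b, c]) :
    LinearIndependent (ZMod 2) ![γ1, γ2, γ3, b, c] :=
  stmt_17_general W σ1 σ2 hσ1 hσ2 b c γ1 γ2 γ3 h2 h3 h4 h5 h6 hbc
end
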